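/- Under Assumption 1, for any initial distribution p₀ ∈ P(𝓜) and any mutant distribution q ∈ P(𝓜): if there exists a Borel measurable function f on 𝓜 such that p*(dx) = f(x) q(dx) (i.e. p* is absolutely continuous with respect to q), then (p_i)_{i≥0} converges in total variation to p*. -/

import Mathlib

open MeasureTheory Set Filter

/-- Selective advantage `s(x,u) = w(x,u) / ∫ w(y,u) u(dy)` if the mean fitness is
positive, and `1` otherwise. -/
noncomputable def sel (w : ℝ → MeasureTheory.Measure ℝ → ℝ)
    (u : MeasureTheory.Measure ℝ) (x : ℝ) : ℝ :=
  if 0 < ∫ y, w y u ∂u then w x u / ∫ y, w y u ∂u else 1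

/-- The sequence of type distributions:
`p_i(dx) = (1-β) s(x,p_{i-1}) p_{i-1}(dx) + β q(dx)`. -/
noncomputable def evol (w : ℝ → MeasureTheory.Measure ℝ → ℝ) (β : ℝ)
    (q p₀ : MeasureTheory.Measure ℝ) : ℕ → MeasureTheory.Measure ℝ
  | 0 => p₀
  | i + 1 =>
      ENNReal.ofReal (1 - β) •
          ((evol w β q p₀ i).withDensity fun x =>
            ENNReal.ofReal (sel w (evol w β q p₀ i) x))
        + ENNReal.ofReal β • q

/-- Convergence in total variation (uniform convergence over all measurable sets). -/
def TendstoTV (p : ℕ → MeasureTheory.Measure ℝ) (μ : MeasureTheory.Measure ℝ) : Prop :=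
  ∀ ε : ℝ, 0 < ε → ∃ N : ℕ, ∀ i ≥ N, ∀ A : Set ℝ, MeasurableSet A →
    |((p i) A).toReal - (μ A).toReal| < ε

/-- Weak convergence of measures (tested against bounded continuous functions). -/
def TendstoWeak (p : ℕ → MeasureTheory.Measure ℝ) (μ : MeasureTheory.Measure ℝ) : Prop :=
  ∀ f : BoundedContinuousFunction ℝ ℝ,
    Filter.Tendsto (fun i => ∫ x, f x ∂(p i)) Filter.atTop (nhds (∫ x, f x ∂μ))

/-- Assumption 1: if `v` restricted to `[0,M)` is a component of `u` restricted to `[0,M)`,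
then `s(·,u) ≥ s(·,v)` on `[0,M]`. -/
def Assumption1 (M : ℝ) (w : ℝ → MeasureTheory.Measure ℝ → ℝ) : Prop :=
  ∀ u v : MeasureTheory.Measure ℝ,
    IsProbabilityMeasure u → IsProbabilityMeasure v →
    u ((Set.Icc 0 M)ᶜ) = 0 → v ((Set.Icc 0 M)ᶜ) = 0 →
    v.restrict (Set.Ico 0 M) ≤ u.restrict (Set.Ico 0 M) →
    ∀ x ∈ Set.Icc (0:ℝ) M, sel w v x ≤ sel w u x

/-- Assumption 2: for every `0 ≤ a < M` and `0 < ε < 1` there is `c(a,ε) > 1` such that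
`s(M,u) ≥ c(a,ε) s(M,v)` whenever `v_{[0,M)} ≺ u_{[0,M)}` and `D_u(a) ≥ D_v(a) + ε`. -/
def Assumption2 (M : ℝ) (w : ℝ → MeasureTheory.Measure ℝ → ℝ) : Prop :=
  ∀ a : ℝ, 0 ≤ a → a < M → ∀ ε : ℝ, 0 < ε → ε < 1 → ∃ c : ℝ, 1 < c ∧
    ∀ u v : MeasureTheory.Measure ℝ,
      IsProbabilityMeasure u → IsProbabilityMeasure v →
      u ((Set.Icc 0 M)ᶜ) = 0 → v ((Set.Icc 0 M)ᶜ) = 0 →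
      v.restrict (Set.Ico 0 M) ≤ u.restrict (Set.Ico 0 M) →
      (v (Set.Icc 0 a)).toReal + ε ≤ (u (Set.Icc 0 a)).toReal →
      c * sel w v M ≤ sel w u M

/-! The chain `p̂ᵢ` started from `δ_M` carries the least mass on `[0, M)`: by Assumption 1 and
induction, `p̂ᵢ` restricted to `[0, M)` is dominated by `pᵢ` restricted to `[0, M)`, whatever `p₀`.
Both being probability measures on `[0, M]`, they then differ in total variation by at most
`δᵢ = p̂ᵢ{M} - pᵢ{M}`. The atoms at `M` follow affine recursions `x ↦ (1 - β) s(M, ·) x + β q{M}`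
with ordered slopes, so if `q{M} > 0` the gap `δᵢ` shrinks geometrically with ratio `1 - β q{M}`.
If `q{M} = 0`, then `p*{M} = 0` by absolute continuity, and `δᵢ ≤ p̂ᵢ{M} → p*{M} = 0`. -/

open Topology

lemma sub_le_pow_mul_of_affine_recurrence {a b r : ℕ → ℝ} {c : ℝ} (hc₀ : 0 ≤ c) (hc₁ : c ≤ 1)
    (hr : ∀ i, 0 ≤ r i) (ha₁ : ∀ i, a i ≤ 1) (hb₀ : 0 ≤ b 0)
    (ha : ∀ i, a (i + 1) = r i * a i + c) (hb : ∀ i, r i * b i + c ≤ b (i + 1)) (i : ℕ) :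
    a i - b i ≤ (1 - c) ^ i * a i := by
  induction i with
  | zero => simpa using hb₀
  | succ i ih =>
    have hlast : a (i + 1) - c ≤ (1 - c) * a (i + 1) := by nlinarith [ha₁ (i + 1)]
    calc a (i + 1) - b (i + 1) ≤ r i * (a i - b i) := by linarith [ha i, hb i]
      _ ≤ r i * ((1 - c) ^ i * a i) := mul_le_mul_of_nonneg_left ih (hr i)
      _ = (1 - c) ^ i * (a (i + 1) - c) := by rw [ha i]; ring
      _ ≤ (1 - c) ^ i * ((1 - c) * a (i + 1)) :=
          mul_le_mul_of_nonneg_left hlast (pow_nonneg (sub_nonneg.2 hc₁) i)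
      _ = (1 - c) ^ (i + 1) * a (i + 1) := by ring

section AtomDecomposition

variable {α : Type*} [MeasurableSpace α] [MeasurableSingletonClass α] {I : Set α} {a : α}

lemma measureReal_eq_inter_add_inter_singleton {r : Measure α} [IsFiniteMeasure r]
    (ha : a ∉ I) (hr : r (insert a I)ᶜ = 0) {B : Set α} (hB : MeasurableSet B) :
    r.real B = r.real (B ∩ I) + r.real (B ∩ {a}) := by
  have hdisj : Disjoint (B ∩ I) (B ∩ {a}) :=
    (disjoint_singleton_right.2 ha).mono inter_subset_right inter_subset_right
  rw [measureReal_def, ← measure_inter_conull hr, insert_eq, union_comm,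
    inter_union_distrib_left, ← measureReal_def,
    measureReal_union hdisj (hB.inter (measurableSet_singleton a))]

lemma abs_measureReal_sub_le_of_restrict_le {μ ν : Measure α} [IsProbabilityMeasure μ]
    [IsProbabilityMeasure ν] (ha : a ∉ I) (hμ : μ (insert a I)ᶜ = 0)
    (hν : ν (insert a I)ᶜ = 0) (hle : ν.restrict I ≤ μ.restrict I) {A : Set α}
    (hA : MeasurableSet A) : |μ.real A - ν.real A| ≤ ν.real {a} - μ.real {a} := by
  have hleI : ∀ B, MeasurableSet B → ν.real (B ∩ I) ≤ μ.real (B ∩ I) := fun B hB => by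
    simpa only [← measureReal_def, measureReal_restrict_apply hB] using
      ENNReal.toReal_mono (by finiteness) (Measure.le_iff'.1 hle B)
  have hμA := measureReal_eq_inter_add_inter_singleton ha hμ hA
  have hνA := measureReal_eq_inter_add_inter_singleton ha hν hA
  have hμAc := measureReal_eq_inter_add_inter_singleton ha hμ hA.compl
  have hνAc := measureReal_eq_inter_add_inter_singleton ha hν hA.compl
  have hμ1 := measureReal_add_measureReal_compl (μ := μ) hA
  have hν1 := measureReal_add_measureReal_compl (μ := ν) hA
  have := hleI A hA
  have := hleI Aᶜ hA.compl
  rw [probReal_univ] at hμ1 hν1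
  rw [abs_le]
  by_cases haA : a ∈ A
  · rw [inter_singleton_of_mem haA] at hμA hνA
    rw [inter_singleton_eq_empty.2 (not_not_intro haA), measureReal_empty] at hμAc hνAc
    constructor <;> linarith
  · rw [inter_singleton_of_mem (mem_compl haA)] at hμAc hνAc
    rw [inter_singleton_eq_empty.2 haA, measureReal_empty] at hμA hνA
    constructor <;> linarith

end AtomDecomposition

lemma TendstoTV.tendsto_measureReal {p : ℕ → Measure ℝ} {μ : Measure ℝ} (h : TendstoTV p μ)
    {A : Set ℝ} (hA : MeasurableSet A) : Tendsto (fun i => (p i).real A) atTop (𝓝 (μ.real A)) :=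
  Metric.tendsto_atTop.2 fun ε hε => (h ε hε).imp fun _ hN i hi => hN i hi A hA

lemma TendstoTV.of_abs_sub_le {p p' : ℕ → Measure ℝ} {μ : Measure ℝ} {δ : ℕ → ℝ}
    (h : TendstoTV p' μ) (hδ : Tendsto δ atTop (𝓝 0))
    (hle : ∀ i A, MeasurableSet A → |(p i).real A - (p' i).real A| ≤ δ i) : TendstoTV p μ := by
  intro ε hε
  obtain ⟨N₁, hN₁⟩ := h (ε / 2) (half_pos hε)
  obtain ⟨N₂, hN₂⟩ := eventually_atTop.1 (hδ.eventually (gt_mem_nhds (half_pos hε)))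
  refine ⟨max N₁ N₂, fun i hi A hA => ?_⟩
  calc |(p i).real A - μ.real A|
      ≤ |(p i).real A - (p' i).real A| + |(p' i).real A - μ.real A| := abs_sub_le _ _ _
    _ < ε / 2 + ε / 2 :=
        add_lt_add_of_le_of_lt ((hle i A hA).trans (hN₂ i (le_of_max_le_right hi)).le)
          (hN₁ i (le_of_max_le_left hi) A hA)
    _ = ε := add_halves ε

section Selection

variable {w : ℝ → Measure ℝ → ℝ} {u : Measure ℝ}

lemma sel_nonneg (hw : ∀ x, 0 ≤ w x u) (x : ℝ) : 0 ≤ sel w u x := by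
  unfold sel
  split_ifs with h
  · exact div_nonneg (hw x) h.le
  · exact zero_le_one

lemma lintegral_ofReal_sel [IsProbabilityMeasure u] (hw : ∀ x, 0 ≤ w x u) :
    ∫⁻ x, ENNReal.ofReal (sel w u x) ∂u = 1 := by
  unfold sel
  split_ifs with h
  · have hint : Integrable (fun y => w y u) u := by
      by_contra hni
      rw [integral_undef hni] at h
      exact lt_irrefl 0 h
    simp_rw [div_eq_mul_inv, ENNReal.ofReal_mul' (inv_nonneg.2 h.le),
      ENNReal.ofReal_inv_of_pos h]
    rw [lintegral_mul_const' _ _ (by simpa using h),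
      ← ofReal_integral_eq_lintegral_ofReal hint (Eventually.of_forall hw),
      ENNReal.mul_inv_cancel (by simpa using h) ENNReal.ofReal_ne_top]
  · simp

end Selection

section Evolution

variable {w : ℝ → Measure ℝ → ℝ} {β : ℝ} {q p₀ : Measure ℝ}

lemma evol_succ_apply (i : ℕ) {A : Set ℝ} (hA : MeasurableSet A) :
    evol w β q p₀ (i + 1) A =
      ENNReal.ofReal (1 - β) *
          ∫⁻ x in A, ENNReal.ofReal (sel w (evol w β q p₀ i) x) ∂evol w β q p₀ i
        + ENNReal.ofReal β * q A := by
  rw [evol, Measure.add_apply, Measure.smul_apply, Measure.smul_apply, withDensity_apply _ hA,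
    smul_eq_mul, smul_eq_mul]

lemma evol_apply_eq_zero {S : Set ℝ} (hS : MeasurableSet S) (hq : q S = 0) (hp₀ : p₀ S = 0)
    (i : ℕ) : evol w β q p₀ i S = 0 := by
  induction i with
  | zero => exact hp₀
  | succ i ih => simp [evol_succ_apply i hS, setLIntegral_measure_zero _ _ ih, hq]

variable [IsProbabilityMeasure q] [IsProbabilityMeasure p₀]

lemma isProbabilityMeasure_evol (hβ₀ : 0 ≤ β) (hβ₁ : β ≤ 1) (hw : ∀ x u, 0 ≤ w x u) (i : ℕ) :
    IsProbabilityMeasure (evol w β q p₀ i) := by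
  induction i with
  | zero => assumption
  | succ i ih =>
    constructor
    rw [evol_succ_apply i MeasurableSet.univ, Measure.restrict_univ,
      lintegral_ofReal_sel (hw · _), measure_univ, mul_one, mul_one,
      ← ENNReal.ofReal_add (by linarith) hβ₀]
    norm_num

lemma evol_succ_real_singleton (hβ₀ : 0 ≤ β) (hβ₁ : β ≤ 1) (hw : ∀ x u, 0 ≤ w x u)
    (i : ℕ) (a : ℝ) :
    (evol w β q p₀ (i + 1)).real {a} =
      (1 - β) * sel w (evol w β q p₀ i) a * (evol w β q p₀ i).real {a} + β * q.real {a} := by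
  have := isProbabilityMeasure_evol (q := q) (p₀ := p₀) hβ₀ hβ₁ hw i
  rw [measureReal_def, evol_succ_apply i (measurableSet_singleton a), lintegral_singleton,
    ENNReal.toReal_add (by finiteness) (by finiteness)]
  simp only [ENNReal.toReal_mul, ENNReal.toReal_ofReal (sub_nonneg.2 hβ₁),
    ENNReal.toReal_ofReal hβ₀, ENNReal.toReal_ofReal (sel_nonneg (fun x => hw x _) a),
    measureReal_def, mul_assoc]

end Evolution

section Domination

variable {w : ℝ → Measure ℝ → ℝ} {β M : ℝ} {q p₀ p₀' : Measure ℝ}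
  [IsProbabilityMeasure q] [IsProbabilityMeasure p₀] [IsProbabilityMeasure p₀']

lemma evol_restrict_Ico_mono (hβ₀ : 0 ≤ β) (hβ₁ : β ≤ 1) (hw : ∀ x u, 0 ≤ w x u)
    (hA1 : Assumption1 M w) (hq : q (Icc 0 M)ᶜ = 0) (hp₀ : p₀ (Icc 0 M)ᶜ = 0)
    (hp₀' : p₀' (Icc 0 M)ᶜ = 0) (h₀ : p₀'.restrict (Ico 0 M) ≤ p₀.restrict (Ico 0 M)) (i : ℕ) :
    (evol w β q p₀' i).restrict (Ico 0 M) ≤ (evol w β q p₀ i).restrict (Ico 0 M) := by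
  induction i with
  | zero => exact h₀
  | succ i ih =>
    set v := evol w β q p₀' i
    set u := evol w β q p₀ i
    have hsel : ∀ x ∈ Ico 0 M, sel w v x ≤ sel w u x := fun x hx =>
      hA1 u v (isProbabilityMeasure_evol hβ₀ hβ₁ hw i) (isProbabilityMeasure_evol hβ₀ hβ₁ hw i)
        (evol_apply_eq_zero measurableSet_Icc.compl hq hp₀ i)
        (evol_apply_eq_zero measurableSet_Icc.compl hq hp₀' i) ih x (Ico_subset_Icc_self hx)
    refine Measure.le_iff.2 fun s hs => ?_
    have hsI := hs.inter (measurableSet_Ico (a := (0 : ℝ)) (b := M))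
    rw [Measure.restrict_apply hs, Measure.restrict_apply hs, evol_succ_apply i hsI,
      evol_succ_apply i hsI]
    gcongr _ * ?_ + _
    calc ∫⁻ x in s ∩ Ico 0 M, ENNReal.ofReal (sel w v x) ∂v
        ≤ ∫⁻ x in s ∩ Ico 0 M, ENNReal.ofReal (sel w u x) ∂v :=
          setLIntegral_mono' hsI fun x hx => ENNReal.ofReal_le_ofReal (hsel x hx.2)
      _ ≤ ∫⁻ x in s ∩ Ico 0 M, ENNReal.ofReal (sel w u x) ∂u := by
          refine lintegral_mono' ?_ le_rfl
          rw [← Measure.restrict_restrict hs, ← Measure.restrict_restrict hs]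
          exact Measure.restrict_mono subset_rfl ih

lemma sel_evol_le (hβ₀ : 0 ≤ β) (hβ₁ : β ≤ 1) (hw : ∀ x u, 0 ≤ w x u)
    (hA1 : Assumption1 M w) (hq : q (Icc 0 M)ᶜ = 0) (hp₀ : p₀ (Icc 0 M)ᶜ = 0)
    (hp₀' : p₀' (Icc 0 M)ᶜ = 0) (h₀ : p₀'.restrict (Ico 0 M) ≤ p₀.restrict (Ico 0 M)) (i : ℕ)
    {x : ℝ} (hx : x ∈ Icc 0 M) : sel w (evol w β q p₀' i) x ≤ sel w (evol w β q p₀ i) x :=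
  hA1 _ _ (isProbabilityMeasure_evol hβ₀ hβ₁ hw i) (isProbabilityMeasure_evol hβ₀ hβ₁ hw i)
    (evol_apply_eq_zero measurableSet_Icc.compl hq hp₀ i)
    (evol_apply_eq_zero measurableSet_Icc.compl hq hp₀' i)
    (evol_restrict_Ico_mono hβ₀ hβ₁ hw hA1 hq hp₀ hp₀' h₀ i) x hx

lemma abs_evol_sub_evol_le (hM : 0 ≤ M) (hβ₀ : 0 ≤ β) (hβ₁ : β ≤ 1) (hw : ∀ x u, 0 ≤ w x u)
    (hA1 : Assumption1 M w) (hq : q (Icc 0 M)ᶜ = 0) (hp₀ : p₀ (Icc 0 M)ᶜ = 0)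
    (hp₀' : p₀' (Icc 0 M)ᶜ = 0) (h₀ : p₀'.restrict (Ico 0 M) ≤ p₀.restrict (Ico 0 M)) (i : ℕ)
    {A : Set ℝ} (hA : MeasurableSet A) :
    |(evol w β q p₀ i).real A - (evol w β q p₀' i).real A| ≤
      (evol w β q p₀' i).real {M} - (evol w β q p₀ i).real {M} := by
  have := isProbabilityMeasure_evol (q := q) (p₀ := p₀) hβ₀ hβ₁ hw i
  have := isProbabilityMeasure_evol (q := q) (p₀ := p₀') hβ₀ hβ₁ hw i
  have hsupp : ∀ {p : Measure ℝ}, p (Icc 0 M)ᶜ = 0 →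
      evol w β q p i (insert M (Ico 0 M))ᶜ = 0 := fun hp => by
    rw [Ico_insert_right hM]
    exact evol_apply_eq_zero measurableSet_Icc.compl hq hp i
  exact abs_measureReal_sub_le_of_restrict_le right_notMem_Ico (hsupp hp₀) (hsupp hp₀')
    (evol_restrict_Ico_mono hβ₀ hβ₁ hw hA1 hq hp₀ hp₀' h₀ i) hA

lemma tendsto_evol_real_singleton_sub_of_pos (hβ : β ∈ Ioo 0 1) (hw : ∀ x u, 0 ≤ w x u)
    {a : ℝ} (hsel : ∀ i, sel w (evol w β q p₀' i) a ≤ sel w (evol w β q p₀ i) a)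
    (hδ : ∀ i, 0 ≤ (evol w β q p₀' i).real {a} - (evol w β q p₀ i).real {a})
    (hqa : 0 < q.real {a}) :
    Tendsto (fun i => (evol w β q p₀' i).real {a} - (evol w β q p₀ i).real {a}) atTop (𝓝 0) := by
  obtain ⟨hβ₀, hβ₁⟩ := hβ
  have := isProbabilityMeasure_evol (q := q) (p₀ := p₀') hβ₀.le hβ₁.le hw
  have hc : 0 < β * q.real {a} := mul_pos hβ₀ hqa
  have hc₁ : β * q.real {a} < 1 := mul_lt_one_of_nonneg_of_lt_one_left hβ₀.le hβ₁ measureReal_le_one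
  have hbound := sub_le_pow_mul_of_affine_recurrence hc.le hc₁.le
    (a := fun i => (evol w β q p₀' i).real {a}) (b := fun i => (evol w β q p₀ i).real {a})
    (r := fun i => (1 - β) * sel w (evol w β q p₀' i) a)
    (fun i => mul_nonneg (by linarith) (sel_nonneg (fun x => hw x _) a))
    (fun i => measureReal_le_one) measureReal_nonneg
    (fun i => evol_succ_real_singleton hβ₀.le hβ₁.le hw i a)
    (fun i => by
      rw [evol_succ_real_singleton hβ₀.le hβ₁.le hw i a]
      gcongr
      exact hsel i)
  refine squeeze_zero hδ (fun i => (hbound i).trans ?_)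
    (tendsto_pow_atTop_nhds_zero_of_lt_one (r := 1 - β * q.real {a}) (by linarith) (by linarith))
  exact mul_le_of_le_one_right (pow_nonneg (by linarith) i) measureReal_le_one

end Domination

theorem stmt9_general (M : ℝ) (hM : 0 < M) (β : ℝ) (hβ : β ∈ Set.Ioo (0:ℝ) 1)
    (q : MeasureTheory.Measure ℝ) [IsProbabilityMeasure q] (hq : q ((Set.Icc 0 M)ᶜ) = 0)
    (w : ℝ → MeasureTheory.Measure ℝ → ℝ)
    (hw_nonneg : ∀ x u, 0 ≤ w x u)
    (hA1 : Assumption1 M w)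
    (pstar : MeasureTheory.Measure ℝ)
    (hpstar : TendstoTV (evol w β q (MeasureTheory.Measure.dirac M)) pstar)
    (p₀ : MeasureTheory.Measure ℝ) [IsProbabilityMeasure p₀]
    (hp₀ : p₀ ((Set.Icc 0 M)ᶜ) = 0)
    (hf : ∃ f : ℝ → ℝ, Measurable f ∧
      pstar = q.withDensity fun x => ENNReal.ofReal (f x)) :
    TendstoTV (evol w β q p₀) pstar := by
  have hβ₀ := hβ.1.le
  have hβ₁ := hβ.2.le
  have hdirac : Measure.dirac M (Icc 0 M)ᶜ = 0 := by
    simp [Measure.dirac_apply' _ measurableSet_Icc.compl, hM.le]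
  have h₀ : (Measure.dirac M).restrict (Ico 0 M) ≤ p₀.restrict (Ico 0 M) := by
    rw [Measure.restrict_eq_zero.2 (by simp [Measure.dirac_apply' _ measurableSet_Ico])]
    exact Measure.zero_le _
  have htv i A (hA : MeasurableSet A) :=
    abs_evol_sub_evol_le hM.le hβ₀ hβ₁ hw_nonneg hA1 hq hp₀ hdirac h₀ i hA
  refine hpstar.of_abs_sub_le ?_ htv
  have hδ i := (abs_nonneg _).trans (htv i ∅ MeasurableSet.empty)
  rcases eq_or_ne (q {M}) 0 with hqM | hqM
  · obtain ⟨f, -, rfl⟩ := hf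
    have hpstarM := hpstar.tendsto_measureReal (measurableSet_singleton M)
    rw [measureReal_def, withDensity_apply _ (measurableSet_singleton M),
      Measure.restrict_eq_zero.2 hqM, lintegral_zero_measure, ENNReal.toReal_zero] at hpstarM
    exact squeeze_zero hδ (fun i => sub_le_self _ measureReal_nonneg) hpstarM
  · exact tendsto_evol_real_singleton_sub_of_pos hβ hw_nonneg
      (fun i => sel_evol_le hβ₀ hβ₁ hw_nonneg hA1 hq hp₀ hdirac h₀ i ⟨hM.le, le_rfl⟩) hδ
      (ENNReal.toReal_pos hqM (measure_ne_top _ _))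

/-- Corollary "forking" of the paper. Under Assumption 1, for any `p₀`, `q`:
if `p*(dx) = f(x) q(dx)` for some Borel measurable `f`, then `(p_i)` converges in total
variation to `p*`. -/
theorem stmt9 (M : ℝ) (hM : 0 < M) (β : ℝ) (hβ : β ∈ Set.Ioo (0:ℝ) 1)
    (q : MeasureTheory.Measure ℝ) [IsProbabilityMeasure q] (hq : q ((Set.Icc 0 M)ᶜ) = 0)
    (w : ℝ → MeasureTheory.Measure ℝ → ℝ)
    (hw_nonneg : ∀ x u, 0 ≤ w x u)
    (hw_meas : ∀ u, Measurable fun x => w x u)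
    (hA1 : Assumption1 M w)
    (pstar : MeasureTheory.Measure ℝ) [IsProbabilityMeasure pstar]
    (hpstar : TendstoTV (evol w β q (MeasureTheory.Measure.dirac M)) pstar)
    (p₀ : MeasureTheory.Measure ℝ) [IsProbabilityMeasure p₀]
    (hp₀ : p₀ ((Set.Icc 0 M)ᶜ) = 0)
    (hf : ∃ f : ℝ → ℝ, Measurable f ∧
      pstar = q.withDensity fun x => ENNReal.ofReal (f x)) :
    TendstoTV (evol w β q p₀) pstar :=
  stmt9_general M hM β hβ q hq w hw_nonneg hA1 pstar hpstar p₀ hp₀ hf
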